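/- arXiv:1301.4378 — 2 statements merged into one kernel-verified Lean document; each statement's English description precedes it below -/
import Mathlib

section
/- Let y : [t₀, ∞) → ℝ be twice continuously differentiable with y(t) > 0, ẏ(t) > 0 for all t ≥ t₀, and suppose ÿ(t) ≥ (3/2)·ẏ(t)²/y(t) for all t ≥ t₀. Then y cannot be defined (finite) on all of [t₀, ∞); more precisely, if such y exists on [t₀, T) maximally, then T < ∞ and y(t) → ∞ as t → T. -/
/-!
With `z = y ^ (-1/2)` one computes `z'' = (1/2) y ^ (-5/2) ((3/2) ẏ² - y ÿ)`, so the differential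
inequality says exactly that `z` is concave. Since `ẏ > 0`, also `z' < 0` at `t₀`, and a concave
function lies below its tangent line, which reaches `0` in finite time. This contradicts `z > 0`.
-/

open Set Real

theorem HasDerivAt.rpow_neg_half {f : ℝ → ℝ} {f' x : ℝ} (hf : HasDerivAt f f' x) (hx : 0 < f x) :
    HasDerivAt (fun t => f t ^ (-(1 / 2) : ℝ)) (-(1 / 2) * f x ^ (-(3 / 2) : ℝ) * f') x := by
  convert hf.rpow_const (p := -(1 / 2)) (Or.inl hx.ne') using 1
  norm_num
  ring

theorem hasDerivAt_deriv_rpow_neg_half {y y' : ℝ → ℝ} {y'' t : ℝ}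
    (hy : HasDerivAt y (y' t) t) (hy' : HasDerivAt y' y'' t) (ht : 0 < y t) :
    HasDerivAt (fun s => -(1 / 2) * y s ^ (-(3 / 2) : ℝ) * y' s)
      (1 / 2 * y t ^ (-(5 / 2) : ℝ) * (3 / 2 * y' t ^ 2 - y t * y'')) t := by
  have hpow : y t ^ (-(5 / 2) : ℝ) = y t ^ (-(3 / 2) : ℝ) / y t := by
    rw [← rpow_sub_one ht.ne']
    norm_num
  refine (((hy.rpow_const (Or.inl ht.ne')).const_mul (-(1 / 2))).mul hy').congr_deriv ?_
  rw [show (-(3 / 2) : ℝ) - 1 = -(5 / 2) by norm_num, hpow]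
  field_simp
  ring

theorem concaveOn_rpow_neg_half {D : Set ℝ} (hD : Convex ℝ D) {y y' y'' : ℝ → ℝ}
    (hy : ∀ t ∈ D, HasDerivAt y (y' t) t) (hy' : ∀ t ∈ D, HasDerivAt y' (y'' t) t)
    (hpos : ∀ t ∈ D, 0 < y t) (hineq : ∀ t ∈ D, 3 / 2 * y' t ^ 2 / y t ≤ y'' t) :
    ConcaveOn ℝ D (fun t => y t ^ (-(1 / 2) : ℝ)) := by
  have hz (t) (ht : t ∈ D) := (hy t ht).rpow_neg_half (hpos t ht)
  have hz' (t) (ht : t ∈ D) := hasDerivAt_deriv_rpow_neg_half (hy t ht) (hy' t ht) (hpos t ht)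
  refine concaveOn_of_hasDerivWithinAt2_nonpos hD
    (fun t ht => (hz t ht).continuousAt.continuousWithinAt)
    (fun t ht => (hz t (interior_subset ht)).hasDerivWithinAt)
    (fun t ht => (hz' t (interior_subset ht)).hasDerivWithinAt) fun t ht => ?_
  have ht := interior_subset ht
  have hyy : 3 / 2 * y' t ^ 2 ≤ y'' t * y t := (div_le_iff₀ (hpos t ht)).mp (hineq t ht)
  exact mul_nonpos_of_nonneg_of_nonpos (by positivity [hpos t ht]) (by linarith)

theorem ConcaveOn.exists_nonpos_of_hasDerivAt_neg {f : ℝ → ℝ} {a f' : ℝ}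
    (hf : ConcaveOn ℝ (Ici a) f) (hf' : HasDerivAt f f' a) (hneg : f' < 0) :
    ∃ t, a ≤ t ∧ f t ≤ 0 := by
  by_cases ha : f a ≤ 0
  · exact ⟨a, le_rfl, ha⟩
  have hlen : 0 < -f a / f' := div_pos_of_neg_of_neg (by linarith) hneg
  refine ⟨a + -f a / f', by linarith, ?_⟩
  have hslope := hf.slope_le_of_hasDerivAt (mem_Ici.2 le_rfl) (mem_Ici.2 (by linarith))
    (lt_add_of_pos_right a hlen) hf'
  rw [slope_def_field, add_sub_cancel_left, div_le_iff₀ hlen] at hslope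
  have : f' * (-f a / f') = -f a := mul_div_cancel₀ _ hneg.ne
  linarith

/-- Levine-type blow-up: a `C²` function with `y > 0`, `ẏ > 0` and
`ÿ ≥ (3/2) ẏ²/y` on all of `[t₀, ∞)` cannot exist. -/
theorem stmt_11 (t₀ : ℝ) (y : ℝ → ℝ) (hy : ContDiff ℝ 2 y)
    (hpos : ∀ t, t₀ ≤ t → 0 < y t)
    (hpos' : ∀ t, t₀ ≤ t → 0 < deriv y t)
    (hconv : ∀ t, t₀ ≤ t →
      (3 / 2) * (deriv y t) ^ 2 / y t ≤ deriv (deriv y) t) :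
    False := by
  have hy₁ : Differentiable ℝ y := hy.differentiable (by norm_num)
  have hy₂ : Differentiable ℝ (deriv y) := hy.differentiable_deriv_two
  have hconc : ConcaveOn ℝ (Ici t₀) (fun t => y t ^ (-(1 / 2) : ℝ)) :=
    concaveOn_rpow_neg_half (convex_Ici t₀) (fun t _ => (hy₁ t).hasDerivAt)
      (fun t _ => (hy₂ t).hasDerivAt) hpos hconv
  have hneg : -(1 / 2) * y t₀ ^ (-(3 / 2) : ℝ) * deriv y t₀ < 0 :=
    mul_neg_of_neg_of_pos (mul_neg_of_neg_of_pos (by norm_num)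
      (rpow_pos_of_pos (hpos t₀ le_rfl) _)) (hpos' t₀ le_rfl)
  obtain ⟨t, ht, hzt⟩ := hconc.exists_nonpos_of_hasDerivAt_neg
    ((hy₁ t₀).hasDerivAt.rpow_neg_half (hpos t₀ le_rfl)) hneg
  exact (rpow_pos_of_pos (hpos t ht) _).not_ge hzt
end

section
/- Suppose y : [t₀,∞) → ℝ is C² with y > 0, ẏ > 0, ÿ ≥ 8A² + ε* where A ≥ 0 satisfies ẏ ≤ 2√y·A + δ for small δ ≥ 0 with δ ≤ min(√(ε* y)/10, ẏ/2). Then ÿ ≥ (3/2)ẏ²/y + ε*/2. -/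
/-- Algebraic upgrade step in Levine's argument: if `y, ẏ > 0`,
`ÿ ≥ 8A² + ε*`, `ẏ ≤ 2√y·A + δ` with `A ≥ 0`, `0 ≤ δ`,
`δ ≤ √(ε* y)/10` and `δ ≤ ẏ/2`, then `ÿ ≥ (3/2) ẏ²/y + ε*/2`. -/
theorem stmt_15 (y yd ydd A ε δ : ℝ)
    (hy : 0 < y) (hyd : 0 < yd) (hA : 0 ≤ A) (hε : 0 < ε) (hδ : 0 ≤ δ)
    (hconv : 8 * A ^ 2 + ε ≤ ydd)
    (hCS : yd ≤ 2 * Real.sqrt y * A + δ)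
    (hδ1 : δ ≤ Real.sqrt (ε * y) / 10)
    (hδ2 : δ ≤ yd / 2) :
    (3 / 2) * yd ^ 2 / y + ε / 2 ≤ ydd := by
  have hs : Real.sqrt y ^ 2 = y := Real.sq_sqrt hy.le
  have h1 : yd - δ ≤ 2 * Real.sqrt y * A := by linarith
  have h2 : (yd - δ) ^ 2 ≤ 4 * y * A ^ 2 := by
    nlinarith [Real.sqrt_nonneg y, sq_nonneg (2 * Real.sqrt y * A - (yd - δ))]
  have h3 : δ ^ 2 ≤ ε * y / 100 := by
    have h := Real.sq_sqrt (mul_nonneg hε.le hy.le)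
    nlinarith [Real.sqrt_nonneg (ε * y)]
  have key : (3 / 2) * yd ^ 2 / y ≤ ydd - ε / 2 := by
    rw [div_le_iff₀ hy]
    nlinarith [sq_nonneg (yd - 4 * δ)]
  linarith
end
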